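/- For each even integer x ≥ 4 and each r, s ≥ 0 with x = 2r + 2s + 4, the concatenation of the three sequences described below is a Hamiltonian path on {0,...,6r+4s+9} in K_{6r+4s+10} whose multiset of edge lengths is {1^{x-2}, x^{x+2r+3}}: first the 2s+2 pairs [2r+1, 4r+2s+5], [4r+2s+6, 2r+2], [2r+3, 4r+2s+7], ..., [4r+4s+6, 2r+2s+2]; then the 2r+1 triples [6r+4s+8, 4r+2s+4, 2r], [2r-1, 4r+2s+3, 6r+4s+7], ..., [4r+4s+8, 2r+2s+4, 0]; then [6r+4s+9, 2r+2s+3, 4r+4s+7]. Here the edge length between u and w in K_v with v = 6r+4s+10 is min(|u-w|, v-|u-w|). -/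

import Mathlib

/-- The cyclic edge length between vertices `a` and `b` in `K_v`. -/
def ell (v a b : ℕ) : ℕ := min (Nat.dist a b) (v - Nat.dist a b)

/-- The multiset of edge lengths of a path `h` in `K_v`. -/
def edgeLengths (v : ℕ) (h : List ℕ) : Multiset ℕ :=
  ↑(List.zipWith (ell v) h h.tail)

/-- `h` is a Hamiltonian path on the vertex set `{0, ..., v-1}` of `K_v`:
it is a list using each of `0, ..., v-1` exactly once. -/
def IsHamPath (v : ℕ) (h : List ℕ) : Prop := h.Perm (List.range v)

/-!
Put `x = 2r + 2s + 4`, so that `v = 6r + 4s + 10 = 3x - 2`. The pairs alternate between the runs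
starting at `2r+1` and at `4r+2s+5`, which are `x` apart; the triples zigzag down the runs ending
at `6r+4s+8`, `4r+2s+4` and `2r`, again `x` apart; within both blocks consecutive pairs or
triples are joined by edges of length `1`. These five runs and the three final vertices tile
`{0, …, v-1}`. Of the remaining edges, the one from the pairs to the triples and the first one of
the final triple span `2x - 2`, hence have cyclic length `v - (2x - 2) = x`; the edge from `0`
to `v - 1` has length `1`, and the last edge has length `x`.
-/

lemma ell_of_two_mul_le {v a b d : ℕ} (hab : a + d = b ∨ b + d = a) (hd : 2 * d ≤ v) :
    ell v a b = d := by
  unfold ell Nat.dist; omega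

lemma ell_of_le_two_mul {v a b d : ℕ} (hab : a + d = b ∨ b + d = a) (hd : v ≤ 2 * d)
    (hdv : d ≤ v) : ell v a b = v - d := by
  unfold ell Nat.dist; omega

lemma ite_le_and_lt_add_succ (a x n : ℕ) :
    (if a ≤ x ∧ x < a + (n + 1) then 1 else 0) =
      (if a ≤ x ∧ x < a + n then 1 else 0) + if a + n = x then 1 else 0 := by
  split_ifs <;> omega

lemma ite_lt_add_succ_and_le {c n : ℕ} (x : ℕ) (hn : n ≤ c) :
    (if c < x + (n + 1) ∧ x ≤ c then 1 else 0) =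
      (if c < x + n ∧ x ≤ c then 1 else 0) + if c - n = x then 1 else 0 := by
  split_ifs <;> omega

section edgeLengths

variable (v : ℕ)

@[simp]
lemma edgeLengths_singleton (a : ℕ) : edgeLengths v [a] = 0 := rfl

@[simp]
lemma edgeLengths_cons_cons (a b : ℕ) (l : List ℕ) :
    edgeLengths v (a :: b :: l) = ell v a b ::ₘ edgeLengths v (b :: l) := rfl

lemma edgeLengths_append_cons (l₁ l₂ : List ℕ) (x : ℕ) :
    edgeLengths v (l₁ ++ x :: l₂) =
      edgeLengths v (l₁ ++ [x]) + edgeLengths v (x :: l₂) := by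
  induction l₁ with
  | nil => simp
  | cons a l ih =>
    cases l with
    | nil => simp
    | cons b t =>
      simp only [List.cons_append] at ih ⊢
      rw [edgeLengths_cons_cons, edgeLengths_cons_cons, ih, Multiset.cons_add]

lemma edgeLengths_append {l₁ l₂ : List ℕ} {x y : ℕ} (h₁ : l₁.getLast? = some x)
    (h₂ : l₂.head? = some y) :
    edgeLengths v (l₁ ++ l₂) = edgeLengths v l₁ + ell v x y ::ₘ edgeLengths v l₂ := by
  obtain ⟨l₁, rfl⟩ := List.getLast?_eq_some_iff.mp h₁
  obtain ⟨l₂, rfl⟩ := List.head?_eq_some_iff.mp h₂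
  rw [List.append_assoc, List.singleton_append, edgeLengths_append_cons,
    edgeLengths_append_cons v l₁ [] x]
  simp

end edgeLengths

def zigzagPairs (a b n : ℕ) : List ℕ :=
  (List.range n).flatMap fun j => if j % 2 = 0 then [a + j, b + j] else [b + j, a + j]

def zigzagTriples (c d e n : ℕ) : List ℕ :=
  (List.range n).flatMap fun t =>
    if t % 2 = 0 then [c - t, d - t, e - t] else [e - t, d - t, c - t]

section zigzagPairs

variable (a b : ℕ)

lemma zigzagPairs_succ (n : ℕ) :
    zigzagPairs a b (n + 1) =
      zigzagPairs a b n ++ if n % 2 = 0 then [a + n, b + n] else [b + n, a + n] := by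
  simp [zigzagPairs, List.range_succ]

lemma zigzagPairs_add_two {m : ℕ} (hm : m % 2 = 0) :
    zigzagPairs a b (m + 2) =
      zigzagPairs a b m ++ [a + m, b + m, b + (m + 1), a + (m + 1)] := by
  rw [zigzagPairs_succ, zigzagPairs_succ, if_pos hm, if_neg (by omega)]
  simp

lemma getLast?_zigzagPairs {m : ℕ} (hm : m % 2 = 0) :
    (zigzagPairs a b (m + 2)).getLast? = some (a + (m + 1)) := by
  simp [zigzagPairs_add_two a b hm]

lemma count_zigzagPairs (x n : ℕ) :
    (zigzagPairs a b n).count x =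
      (if a ≤ x ∧ x < a + n then 1 else 0) + if b ≤ x ∧ x < b + n then 1 else 0 := by
  induction n with
  | zero =>
    simp only [zigzagPairs, List.range_zero, List.flatMap_nil, List.count_nil]
    split_ifs <;> omega
  | succ n ih =>
    have hblock : (if n % 2 = 0 then [a + n, b + n] else [b + n, a + n]).count x =
        [a + n, b + n].count x := by
      split_ifs
      exacts [rfl, (List.reverse_perm [a + n, b + n]).count_eq x]
    rw [zigzagPairs_succ, List.count_append, ih, hblock, ite_le_and_lt_add_succ,
      ite_le_and_lt_add_succ]
    simp only [List.count_cons, List.count_nil, beq_iff_eq]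
    omega

lemma edgeLengths_zigzagPairs_block {v : ℕ} (hab : a ≤ b) (hba : 2 * (b - a) ≤ v)
    (hv : 2 ≤ v) (m : ℕ) :
    edgeLengths v [a + m, b + m, b + (m + 1), a + (m + 1)] = {b - a, 1, b - a} := by
  rw [edgeLengths_cons_cons, edgeLengths_cons_cons, edgeLengths_cons_cons, edgeLengths_singleton,
    ell_of_two_mul_le (d := b - a) (by omega) hba, ell_of_two_mul_le (d := 1) (by omega) hv,
    ell_of_two_mul_le (d := b - a) (by omega) hba]
  rfl

lemma edgeLengths_zigzagPairs {v : ℕ} (hab : a ≤ b) (hba : 2 * (b - a) ≤ v) (hv : 2 ≤ v)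
    (k : ℕ) : edgeLengths v (zigzagPairs a b (2 * k + 2)) =
      Multiset.replicate (2 * k + 2) (b - a) + Multiset.replicate (2 * k + 1) 1 := by
  induction k with
  | zero =>
    rw [show zigzagPairs a b (2 * 0 + 2) = [a + 0, b + 0, b + (0 + 1), a + (0 + 1)] from rfl,
      edgeLengths_zigzagPairs_block a b hab hba hv]
    ext x
    simp only [Multiset.count_add, Multiset.count_cons, Multiset.count_replicate,
      Multiset.insert_eq_cons, Multiset.count_singleton]
    split_ifs <;> omega
  | succ k ih =>
    rw [show 2 * (k + 1) + 2 = 2 * k + 2 + 2 by ring, zigzagPairs_add_two a b (by omega),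
      edgeLengths_append v (getLast?_zigzagPairs a b (by omega)) rfl, ih,
      ell_of_two_mul_le (d := 1) (by omega) hv, edgeLengths_zigzagPairs_block a b hab hba hv]
    ext x
    simp only [Multiset.count_add, Multiset.count_cons, Multiset.count_replicate,
      Multiset.insert_eq_cons, Multiset.count_singleton]
    split_ifs <;> omega

end zigzagPairs

section zigzagTriples

variable (c d e : ℕ)

lemma zigzagTriples_succ (n : ℕ) :
    zigzagTriples c d e (n + 1) = zigzagTriples c d e n ++
      if n % 2 = 0 then [c - n, d - n, e - n] else [e - n, d - n, c - n] := by
  simp [zigzagTriples, List.range_succ]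

lemma zigzagTriples_add_two {m : ℕ} (hm : m % 2 = 1) :
    zigzagTriples c d e (m + 2) = zigzagTriples c d e m ++
      [e - m, d - m, c - m, c - (m + 1), d - (m + 1), e - (m + 1)] := by
  rw [zigzagTriples_succ, zigzagTriples_succ, if_neg (by omega), if_pos (by omega)]
  simp

lemma head?_zigzagTriples (n : ℕ) : (zigzagTriples c d e (n + 1)).head? = some c := by
  simp [zigzagTriples, List.range_succ_eq_map]

lemma getLast?_zigzagTriples (k : ℕ) :
    (zigzagTriples c d e (2 * k + 1)).getLast? = some (e - 2 * k) := by
  cases k with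
  | zero => rfl
  | succ k =>
    rw [show 2 * (k + 1) + 1 = 2 * k + 1 + 2 by ring, zigzagTriples_add_two c d e (by omega)]
    simp only [List.getLast?_append, List.getLast?_cons_cons, List.getLast?_singleton,
      Option.some_or]
    rfl

lemma count_zigzagTriples {x n : ℕ} (hed : e ≤ d) (hdc : d ≤ c) (hn : n ≤ e + 1) :
    (zigzagTriples c d e n).count x =
      (if c < x + n ∧ x ≤ c then 1 else 0) + (if d < x + n ∧ x ≤ d then 1 else 0) +
        if e < x + n ∧ x ≤ e then 1 else 0 := by
  induction n with
  | zero =>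
    simp only [zigzagTriples, List.range_zero, List.flatMap_nil, List.count_nil]
    split_ifs <;> omega
  | succ n ih =>
    have hblock : (if n % 2 = 0 then [c - n, d - n, e - n] else [e - n, d - n, c - n]).count x =
        [c - n, d - n, e - n].count x := by
      split_ifs
      exacts [rfl, (List.reverse_perm [c - n, d - n, e - n]).count_eq x]
    rw [zigzagTriples_succ, List.count_append, ih (by omega), hblock,
      ite_lt_add_succ_and_le x (by omega : n ≤ c), ite_lt_add_succ_and_le x (by omega : n ≤ d),
      ite_lt_add_succ_and_le x (by omega : n ≤ e)]
    simp only [List.count_cons, List.count_nil, beq_iff_eq]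
    omega

lemma edgeLengths_zigzagTriples_block {v m : ℕ} (hed : e ≤ d) (hdc : d ≤ c)
    (hcd : 2 * (c - d) ≤ v) (hde : 2 * (d - e) ≤ v) (hv : 2 ≤ v) (hm : m + 1 ≤ e) :
    edgeLengths v [e - m, d - m, c - m, c - (m + 1), d - (m + 1), e - (m + 1)] =
      {d - e, c - d, 1, c - d, d - e} := by
  rw [edgeLengths_cons_cons, edgeLengths_cons_cons, edgeLengths_cons_cons, edgeLengths_cons_cons,
    edgeLengths_cons_cons, edgeLengths_singleton,
    ell_of_two_mul_le (d := d - e) (by omega) hde, ell_of_two_mul_le (d := c - d) (by omega) hcd,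
    ell_of_two_mul_le (d := 1) (by omega) hv, ell_of_two_mul_le (d := c - d) (by omega) hcd,
    ell_of_two_mul_le (d := d - e) (by omega) hde]
  rfl

lemma edgeLengths_zigzagTriples {v : ℕ} (hed : e ≤ d) (hdc : d ≤ c)
    (hcd : 2 * (c - d) ≤ v) (hde : 2 * (d - e) ≤ v) (hv : 2 ≤ v) {k : ℕ}
    (hk : 2 * k ≤ e) :
    edgeLengths v (zigzagTriples c d e (2 * k + 1)) = Multiset.replicate (2 * k + 1) (c - d) +
      Multiset.replicate (2 * k + 1) (d - e) + Multiset.replicate (2 * k) 1 := by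
  induction k with
  | zero =>
    rw [show zigzagTriples c d e (2 * 0 + 1) = [c - 0, d - 0, e - 0] from rfl,
      edgeLengths_cons_cons, edgeLengths_cons_cons, edgeLengths_singleton,
      ell_of_two_mul_le (d := c - d) (by omega) hcd, ell_of_two_mul_le (d := d - e) (by omega) hde]
    ext x
    simp only [Multiset.count_add, Multiset.count_cons, Multiset.count_replicate,
      Multiset.count_zero]
    split_ifs <;> omega
  | succ k ih =>
    rw [show 2 * (k + 1) + 1 = 2 * k + 1 + 2 by ring, zigzagTriples_add_two c d e (by omega),
      edgeLengths_append v (getLast?_zigzagTriples c d e k) rfl, ih (by omega),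
      ell_of_two_mul_le (d := 1) (by omega) hv,
      edgeLengths_zigzagTriples_block c d e hed hdc hcd hde hv (by omega)]
    ext x
    simp only [Multiset.count_add, Multiset.count_cons, Multiset.count_replicate,
      Multiset.insert_eq_cons, Multiset.count_singleton]
    split_ifs <;> omega

end zigzagTriples

def realizingPath (r s : ℕ) : List ℕ :=
  zigzagPairs (2 * r + 1) (4 * r + 2 * s + 5) (2 * s + 2) ++
    zigzagTriples (6 * r + 4 * s + 8) (4 * r + 2 * s + 4) (2 * r) (2 * r + 1) ++
    [6 * r + 4 * s + 9, 2 * r + 2 * s + 3, 4 * r + 4 * s + 7]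

lemma isHamPath_realizingPath (r s : ℕ) : IsHamPath (6 * r + 4 * s + 10) (realizingPath r s) := by
  refine List.perm_iff_count.mpr fun x => ?_
  rw [realizingPath, List.count_append, List.count_append, count_zigzagPairs,
    count_zigzagTriples _ _ _ (by omega) (by omega) (by omega), List.count_range]
  simp only [List.count_cons, List.count_nil, beq_iff_eq]
  split_ifs <;> omega

lemma edgeLengths_realizingPath (r s : ℕ) :
    edgeLengths (6 * r + 4 * s + 10) (realizingPath r s) =
      Multiset.replicate (2 * r + 2 * s + 2) 1 +
        Multiset.replicate (4 * r + 2 * s + 7) (2 * r + 2 * s + 4) := by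
  have hlast : (zigzagPairs (2 * r + 1) (4 * r + 2 * s + 5) (2 * s + 2) ++
      zigzagTriples (6 * r + 4 * s + 8) (4 * r + 2 * s + 4) (2 * r) (2 * r + 1)).getLast? =
        some (2 * r - 2 * r) := by
    rw [List.getLast?_append, getLast?_zigzagTriples]
    rfl
  rw [realizingPath, edgeLengths_append _ hlast rfl,
    edgeLengths_append _ (getLast?_zigzagPairs _ _ (m := 2 * s) (by omega))
      (head?_zigzagTriples _ _ _ _),
    edgeLengths_zigzagPairs _ _ (by omega) (by omega) (by omega),
    edgeLengths_zigzagTriples _ _ _ (by omega) (by omega) (by omega) (by omega) (by omega) le_rfl,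
    edgeLengths_cons_cons, edgeLengths_cons_cons, edgeLengths_singleton,
    ell_of_le_two_mul (d := 4 * r + 2 * s + 6) (by omega) (by omega) (by omega),
    ell_of_le_two_mul (d := 6 * r + 4 * s + 9) (by omega) (by omega) (by omega),
    ell_of_le_two_mul (d := 4 * r + 2 * s + 6) (by omega) (by omega) (by omega),
    ell_of_two_mul_le (d := 2 * r + 2 * s + 4) (by omega) (by omega),
    show 4 * r + 2 * s + 5 - (2 * r + 1) = 2 * r + 2 * s + 4 by omega,
    show 6 * r + 4 * s + 8 - (4 * r + 2 * s + 4) = 2 * r + 2 * s + 4 by omega,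
    show 4 * r + 2 * s + 4 - 2 * r = 2 * r + 2 * s + 4 by omega,
    show 6 * r + 4 * s + 10 - (4 * r + 2 * s + 6) = 2 * r + 2 * s + 4 by omega,
    show 6 * r + 4 * s + 10 - (6 * r + 4 * s + 9) = 1 by omega]
  ext x
  simp only [Multiset.count_add, Multiset.count_cons, Multiset.count_replicate,
    Multiset.count_zero]
  split_ifs <;> omega

theorem stmt_15 (r s : ℕ) :
    List.Perm ((List.range (2*s+2)).flatMap (fun j =>
        if j % 2 = 0 then [2*r+1+j, 4*r+2*s+5+j] else [4*r+2*s+5+j, 2*r+1+j]) ++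
      (List.range (2*r+1)).flatMap (fun t =>
        if t % 2 = 0 then [6*r+4*s+8-t, 4*r+2*s+4-t, 2*r-t]
        else [2*r-t, 4*r+2*s+4-t, 6*r+4*s+8-t]) ++
      [6*r+4*s+9, 2*r+2*s+3, 4*r+4*s+7])
      (List.range (6*r+4*s+10)) ∧
    edgeLengths (6*r+4*s+10)
      ((List.range (2*s+2)).flatMap (fun j =>
          if j % 2 = 0 then [2*r+1+j, 4*r+2*s+5+j] else [4*r+2*s+5+j, 2*r+1+j]) ++
        (List.range (2*r+1)).flatMap (fun t =>
          if t % 2 = 0 then [6*r+4*s+8-t, 4*r+2*s+4-t, 2*r-t]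
          else [2*r-t, 4*r+2*s+4-t, 6*r+4*s+8-t]) ++
        [6*r+4*s+9, 2*r+2*s+3, 4*r+4*s+7]) =
      Multiset.replicate (2*r+2*s+2) 1 +
        Multiset.replicate (4*r+2*s+7) (2*r+2*s+4) :=
  ⟨isHamPath_realizingPath r s, edgeLengths_realizingPath r s⟩
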